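/- arXiv:2510.25582 — 8 statements merged into one kernel-verified Lean document; each statement's English description precedes it below -/
import Mathlib

section
/- Let X = (x_i)_{i≥0} be a bidding strategy with x_0 ≥ 1. Then its competitive ratio satisfies sup_{u≥1} cost(X,u)/u = max( x_0 , sup_{i≥0} (Σ_{j=0}^{i+1} x_j)/x_i ). In particular, for any r ≥ 1, X has competitive ratio at most r if and only if x_0 ≤ r and x_{i+1} ≤ r·x_i − Σ_{j=0}^{i} x_j for all i ≥ 0. -/
/-- The least index `i` such that the bid `X i` reaches the target `u`. -/
noncomputable def costIdx (X : ℕ → ℝ) (u : ℝ) : ℕ := sInf {i : ℕ | u ≤ X i}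

/-- The cost of bidding strategy `X` on target `u`: the sum of bids up to and
including the first bid that is at least `u`. -/
noncomputable def cost (X : ℕ → ℝ) (u : ℝ) : ℝ :=
  ∑ j ∈ Finset.range (costIdx X u + 1), X j

/-- A bidding strategy: a strictly increasing sequence of positive reals tending to infinity. -/
def IsBiddingStrategy (X : ℕ → ℝ) : Prop :=
  StrictMono X ∧ (∀ i, 0 < X i) ∧ Filter.Tendsto X Filter.atTop Filter.atTop

/-!
On each interval `X i < u ≤ X (i + 1)` the cost is the constant `∑_{j ≤ i+1} X j`, so there
`cost X u / u` decreases in `u` and its supremum is the right-hand limit `(∑_{j ≤ i+1} X j) / X i`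
at `u = X i`; on `1 ≤ u ≤ X 0` the cost is `X 0` and the supremum `X 0` is attained at `u = 1`.
-/

open Filter Topology Finset

variable {X : ℕ → ℝ} {u : ℝ}

lemma cost_of_le_zero (h : u ≤ X 0) : cost X u = X 0 := by
  have hidx : costIdx X u = 0 := Nat.sInf_eq_zero.mpr (Or.inl h)
  simp [cost, hidx]

lemma cost_of_mem_Ioc (hX : Monotone X) {i : ℕ} (hu : u ∈ Set.Ioc (X i) (X (i + 1))) :
    cost X u = ∑ j ∈ range (i + 2), X j := by
  have hidx : costIdx X u = i + 1 := by
    refine le_antisymm (Nat.sInf_le hu.2) (Nat.succ_le_of_lt ?_)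
    by_contra! hle
    have hmem : u ≤ X (costIdx X u) := Nat.sInf_mem (s := {i | u ≤ X i}) ⟨i + 1, hu.2⟩
    exact hu.1.not_ge (hmem.trans (hX hle))
  simp [cost, hidx]

lemma le_zero_or_exists_mem_Ioc (hX : Tendsto X atTop atTop) (u : ℝ) :
    u ≤ X 0 ∨ ∃ i, u ∈ Set.Ioc (X i) (X (i + 1)) := by
  have hne : {i | u ≤ X i}.Nonempty := (hX.eventually_ge_atTop u).exists
  have hmem : u ≤ X (costIdx X u) := Nat.sInf_mem hne
  cases hidx : costIdx X u with
  | zero => exact Or.inl (hidx ▸ hmem)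
  | succ i =>
    have hi : i ∉ {i | u ≤ X i} := Nat.notMem_of_lt_sInf (show i < costIdx X u by omega)
    exact Or.inr ⟨i, not_le.mp hi, hidx ▸ hmem⟩

lemma sum_div_le_of_cost_div_le (hX : StrictMono X) {i : ℕ} (hpos : 0 < X i) {r : ℝ}
    (h : ∀ u ∈ Set.Ioc (X i) (X (i + 1)), cost X u / u ≤ r) :
    (∑ j ∈ range (i + 2), X j) / X i ≤ r := by
  have hlim : Tendsto (fun u => (∑ j ∈ range (i + 2), X j) / u) (𝓝[>] X i)
      (𝓝 ((∑ j ∈ range (i + 2), X j) / X i)) :=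
    ((continuousAt_const.div continuousAt_id hpos.ne').tendsto).mono_left nhdsWithin_le_nhds
  have hev : ∀ᶠ u in 𝓝[>] X i, (∑ j ∈ range (i + 2), X j) / u ≤ r := by
    filter_upwards [Ioo_mem_nhdsGT (hX (Nat.lt_succ_self i))] with u hu
    rw [← cost_of_mem_Ioc hX.monotone ⟨hu.1, hu.2.le⟩]
    exact h u ⟨hu.1, hu.2.le⟩
  exact le_of_tendsto hlim hev

lemma cost_div_le_of_le (hX : IsBiddingStrategy X) {r : ℝ} (h0 : X 0 ≤ r)
    (hsum : ∀ i, (∑ j ∈ range (i + 2), X j) / X i ≤ r) (hu : 1 ≤ u) : cost X u / u ≤ r := by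
  obtain ⟨hmono, hpos, htend⟩ := hX
  rcases le_zero_or_exists_mem_Ioc htend u with hu0 | ⟨i, hui⟩
  · rw [cost_of_le_zero hu0]
    calc X 0 / u ≤ X 0 / 1 := div_le_div_of_nonneg_left (hpos 0).le one_pos hu
      _ = X 0 := div_one _
      _ ≤ r := h0
  · rw [cost_of_mem_Ioc hmono.monotone hui]
    have hS : 0 ≤ ∑ j ∈ range (i + 2), X j := sum_nonneg fun j _ => (hpos j).le
    exact (div_le_div_of_nonneg_left hS (hpos i) hui.1.le).trans (hsum i)

theorem cost_div_le_iff (hX : IsBiddingStrategy X) (h1 : 1 ≤ X 0) (r : ℝ) :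
    (∀ u : ℝ, 1 ≤ u → cost X u / u ≤ r) ↔
      X 0 ≤ r ∧ ∀ i, (∑ j ∈ range (i + 2), X j) / X i ≤ r := by
  refine ⟨fun h => ⟨?_, fun i => ?_⟩, fun ⟨h0, hsum⟩ u => cost_div_le_of_le hX h0 hsum⟩
  · simpa [cost_of_le_zero h1] using h 1 le_rfl
  · refine sum_div_le_of_cost_div_le hX.1 (hX.2.1 i) fun u hu => h u ?_
    exact h1.trans ((hX.1.monotone (Nat.zero_le i)).trans hu.1.le)

theorem stmt0 (X : ℕ → ℝ) (hX : IsBiddingStrategy X) (h1 : 1 ≤ X 0) :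
    (⨆ u : {u : ℝ // 1 ≤ u}, ENNReal.ofReal (cost X u.1 / u.1)) =
      max (ENNReal.ofReal (X 0))
        (⨆ i : ℕ, ENNReal.ofReal ((∑ j ∈ Finset.range (i + 2), X j) / X i)) ∧
    (∀ r : ℝ, 1 ≤ r →
      ((∀ u : ℝ, 1 ≤ u → cost X u / u ≤ r) ↔
        (X 0 ≤ r ∧ ∀ i : ℕ, X (i + 1) ≤ r * X i - ∑ j ∈ Finset.range (i + 1), X j))) := by
  constructor
  · refine eq_of_forall_ge_iff fun c => ?_
    rcases eq_or_ne c ⊤ with rfl | hc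
    · simp
    simp only [iSup_le_iff, max_le_iff, ENNReal.ofReal_le_iff_le_toReal hc, Subtype.forall]
    exact cost_div_le_iff hX h1 c.toReal
  · intro r _
    rw [cost_div_le_iff hX h1 r]
    refine and_congr Iff.rfl (forall_congr' fun i => ?_)
    rw [div_le_iff₀ (hX.2.1 i), sum_range_succ]
    constructor <;> intro h <;> linarith
end

section
/- Let r ≥ 4. A partial strategy Y = (y_i)_{i=0}^{l} is r-extendable if and only if it is tightly r-extendable. -/
/-- A bidding strategy is `r`-robust if `x 0 ≤ r` and
`x (i+1) ≤ r * x i - ∑_{j ≤ i} x j` for all `i`. -/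
def IsRobust (r : ℝ) (X : ℕ → ℝ) : Prop :=
  X 0 ≤ r ∧ ∀ i, X (i + 1) ≤ r * X i - ∑ j ∈ Finset.range (i + 1), X j

/-- A partial strategy with bids `Y 0, …, Y l`: positive and strictly increasing. -/
def IsPartialStrategy (Y : ℕ → ℝ) (l : ℕ) : Prop :=
  (∀ i, i ≤ l → 0 < Y i) ∧ ∀ i, i < l → Y i < Y (i + 1)

/-- The concatenation `(Y 0, …, Y l, Z 0, Z 1, …)`. -/
def concat (Y : ℕ → ℝ) (l : ℕ) (Z : ℕ → ℝ) : ℕ → ℝ :=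
  fun i => if i ≤ l then Y i else Z (i - (l + 1))

/-- `Y` (with bids indexed `0, …, l`) is `r`-extendable if it can be completed
to an `r`-robust bidding strategy. -/
def IsRExtendable (r : ℝ) (Y : ℕ → ℝ) (l : ℕ) : Prop :=
  ∃ Z : ℕ → ℝ, IsBiddingStrategy (concat Y l Z) ∧ IsRobust r (concat Y l Z)

/-- Auxiliary recursion computing the pair `(z n, ∑_{j ≤ n} z j)` of the tight
`r`-extension, where `A = ∑_{j=0}^{l} y j` and `yl = y l` (so `z (-1) = yl`). -/
noncomputable def tightAux (r A yl : ℝ) : ℕ → ℝ × ℝ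
  | 0 => (r * yl - A, r * yl - A)
  | n + 1 =>
      let p := tightAux r A yl n
      let z := r * p.1 - p.2 - A
      (z, p.2 + z)

/-- The tight `r`-extension of the partial strategy `Y` (indexed `0, …, l`):
`z i = r * z (i-1) - ∑_{j < i} z j - ∑_{j=0}^{l} Y j`, with `z (-1) = Y l`. -/
noncomputable def tightExt (r : ℝ) (Y : ℕ → ℝ) (l : ℕ) (n : ℕ) : ℝ :=
  (tightAux r (∑ j ∈ Finset.range (l + 1), Y j) (Y l) n).1

/-- `Y` is tightly `r`-extendable if its concatenation with its tight `r`-extension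
is an `r`-robust bidding strategy. -/
def IsTightlyRExtendable (r : ℝ) (Y : ℕ → ℝ) (l : ℕ) : Prop :=
  IsBiddingStrategy (concat Y l (tightExt r Y l)) ∧ IsRobust r (concat Y l (tightExt r Y l))

/-!
If `Z` is any extension making `Y ++ Z` robust and `T` is the tight extension, then
`d = T - Z` satisfies `0 ≤ d 0` and `r * d n - ∑_{j ≤ n} d j ≤ d (n + 1)`. For `r ≥ 4` this
propagates the invariant `0 ≤ d n`, `∑_{j ≤ n} d j ≤ 2 * d n`, since then
`d (n + 1) ≥ (r - 2) * d n ≥ 2 * d n`. So `T` exceeds `Z` by a nonnegative nondecreasing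
amount, which keeps `Y ++ T` a bidding strategy, and `Y ++ T` is robust because the
robustness inequalities after `Y` hold with equality.
-/

open Finset

lemma tightAux_snd (r A yl : ℝ) :
    ∀ n, (tightAux r A yl n).2 = ∑ j ∈ range (n + 1), (tightAux r A yl j).1
  | 0 => by simp [tightAux]
  | n + 1 => by
      rw [sum_range_succ, ← tightAux_snd r A yl n]
      rfl

lemma tightExt_zero (r : ℝ) (Y : ℕ → ℝ) (l : ℕ) :
    tightExt r Y l 0 = r * Y l - ∑ j ∈ range (l + 1), Y j := rfl

lemma tightExt_succ (r : ℝ) (Y : ℕ → ℝ) (l n : ℕ) :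
    tightExt r Y l (n + 1) = r * tightExt r Y l n
      - (∑ j ∈ range (l + 1), Y j + ∑ j ∈ range (n + 1), tightExt r Y l j) := by
  rw [sub_add_eq_sub_sub_swap]
  unfold tightExt
  rw [← tightAux_snd]
  rfl

section Concat

variable (Y Z : ℕ → ℝ) (l : ℕ)

lemma concat_of_le {i : ℕ} (h : i ≤ l) : concat Y l Z i = Y i := if_pos h

lemma concat_add (k : ℕ) : concat Y l Z (l + 1 + k) = Z k := by
  unfold concat
  rw [if_neg (by omega)]
  congr 1
  omega

lemma sum_range_concat_of_le {i : ℕ} (h : i ≤ l + 1) :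
    ∑ j ∈ range i, concat Y l Z j = ∑ j ∈ range i, Y j :=
  sum_congr rfl fun j hj => concat_of_le Y Z l (by rw [mem_range] at hj; omega)

lemma sum_range_concat_add (k : ℕ) :
    ∑ j ∈ range (l + 1 + k), concat Y l Z j
      = ∑ j ∈ range (l + 1), Y j + ∑ j ∈ range k, Z j := by
  rw [sum_range_add, sum_range_concat_of_le Y Z l le_rfl]
  simp only [concat_add]

lemma concat_sub_concat (Z' : ℕ → ℝ) :
    concat Y l Z' - concat Y l Z = concat 0 l (Z' - Z) := by
  ext i
  simp only [concat, Pi.sub_apply, Pi.zero_apply]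
  split_ifs <;> simp

variable {Y Z l}

lemma concat_zero_nonneg (hZ : 0 ≤ Z) : 0 ≤ concat 0 l Z := fun i => by
  unfold concat
  split_ifs
  exacts [le_rfl, hZ (i - (l + 1))]

lemma monotone_concat_zero (hZ : 0 ≤ Z) (hmono : Monotone Z) : Monotone (concat 0 l Z) := by
  intro a b hab
  unfold concat
  split_ifs with ha hb hb
  · exact le_rfl
  · exact hZ (b - (l + 1))
  · omega
  · exact hmono (by omega)

variable {r : ℝ}

lemma isRobust_concat_iff :
    IsRobust r (concat Y l Z) ↔
      (Y 0 ≤ r ∧ ∀ i < l, Y (i + 1) ≤ r * Y i - ∑ j ∈ range (i + 1), Y j) ∧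
      Z 0 ≤ r * Y l - ∑ j ∈ range (l + 1), Y j ∧
      ∀ n, Z (n + 1) ≤ r * Z n - (∑ j ∈ range (l + 1), Y j + ∑ j ∈ range (n + 1), Z j) := by
  have first : concat Y l Z 0 = Y 0 := concat_of_le Y Z l l.zero_le
  have inY : ∀ i < l, (concat Y l Z (i + 1) ≤ r * concat Y l Z i
      - ∑ j ∈ range (i + 1), concat Y l Z j ↔
        Y (i + 1) ≤ r * Y i - ∑ j ∈ range (i + 1), Y j) := fun i hi => by
    rw [concat_of_le Y Z l hi, concat_of_le Y Z l hi.le, sum_range_concat_of_le Y Z l (by omega)]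
  have atY : (concat Y l Z (l + 1) ≤ r * concat Y l Z l
      - ∑ j ∈ range (l + 1), concat Y l Z j ↔
        Z 0 ≤ r * Y l - ∑ j ∈ range (l + 1), Y j) := by
    rw [← concat_add Y Z l 0, concat_of_le Y Z l le_rfl, sum_range_concat_of_le Y Z l le_rfl]
  have inZ : ∀ n, (concat Y l Z (l + 1 + n + 1) ≤ r * concat Y l Z (l + 1 + n)
      - ∑ j ∈ range (l + 1 + n + 1), concat Y l Z j ↔
        Z (n + 1) ≤ r * Z n - (∑ j ∈ range (l + 1), Y j + ∑ j ∈ range (n + 1), Z j)) :=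
    fun n => by rw [add_assoc (l + 1), concat_add, concat_add, sum_range_concat_add]
  rw [IsRobust, first]
  constructor
  · rintro ⟨h0, h⟩
    exact ⟨⟨h0, fun i hi => (inY i hi).1 (h i)⟩, atY.1 (h l), fun n => (inZ n).1 (h _)⟩
  · rintro ⟨⟨h0, hY⟩, hl, hZ⟩
    refine ⟨h0, fun i => ?_⟩
    rcases lt_trichotomy i l with hi | rfl | hi
    · exact (inY i hi).2 (hY i hi)
    · exact atY.2 hl
    · obtain ⟨n, rfl⟩ : ∃ n, i = l + 1 + n := ⟨i - (l + 1), by omega⟩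
      exact (inZ n).2 (hZ n)

end Concat

lemma IsBiddingStrategy.of_sub_nonneg_monotone {X X' : ℕ → ℝ} (hX : IsBiddingStrategy X)
    (hnonneg : 0 ≤ X' - X) (hmono : Monotone (X' - X)) : IsBiddingStrategy X' := by
  obtain ⟨hXmono, hXpos, hXtop⟩ := hX
  have hle : X ≤ X' := sub_nonneg.1 hnonneg
  refine ⟨fun a b hab => ?_, fun i => (hXpos i).trans_le (hle i), ?_⟩
  · have := hmono hab.le
    have := hXmono hab
    simp only [Pi.sub_apply] at *
    linarith
  · exact Filter.tendsto_atTop_mono hle hXtop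

lemma nonneg_and_two_mul_le_succ {r : ℝ} (hr : 4 ≤ r) {d : ℕ → ℝ} (h0 : 0 ≤ d 0)
    (hd : ∀ n, r * d n - ∑ j ∈ range (n + 1), d j ≤ d (n + 1)) :
    ∀ n, 0 ≤ d n ∧ 2 * d n ≤ d (n + 1) := by
  have invariant : ∀ n, 0 ≤ d n ∧ ∑ j ∈ range (n + 1), d j ≤ 2 * d n := by
    intro n
    induction n with
    | zero =>
      rw [zero_add, sum_range_one]
      constructor <;> linarith
    | succ n ih =>
      have := hd n
      rw [sum_range_succ]
      constructor <;> nlinarith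
  intro n
  have := invariant n
  have := hd n
  constructor <;> nlinarith

lemma tightExt_sub_nonneg_monotone {r : ℝ} (hr : 4 ≤ r) {Y Z : ℕ → ℝ} {l : ℕ}
    (hZ0 : Z 0 ≤ r * Y l - ∑ j ∈ range (l + 1), Y j)
    (hZ : ∀ n, Z (n + 1) ≤ r * Z n - (∑ j ∈ range (l + 1), Y j + ∑ j ∈ range (n + 1), Z j)) :
    0 ≤ tightExt r Y l - Z ∧ Monotone (tightExt r Y l - Z) := by
  have key := nonneg_and_two_mul_le_succ hr (d := tightExt r Y l - Z)
    (by simp only [Pi.sub_apply, tightExt_zero]; linarith) fun n => by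
      have := hZ n
      simp only [Pi.sub_apply, sum_sub_distrib, tightExt_succ]
      linarith
  refine ⟨fun n => (key n).1, monotone_nat_of_le_succ fun n => ?_⟩
  linarith [key n]

theorem stmt1_general (r : ℝ) (hr : 4 ≤ r) (Y : ℕ → ℝ) (l : ℕ) :
    IsRExtendable r Y l ↔ IsTightlyRExtendable r Y l := by
  refine ⟨fun ⟨Z, hbid, hrob⟩ => ?_, fun h => ⟨_, h⟩⟩
  obtain ⟨hY, hZ0, hZ⟩ := isRobust_concat_iff.1 hrob
  obtain ⟨hnonneg, hmono⟩ := tightExt_sub_nonneg_monotone hr hZ0 hZ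
  refine ⟨hbid.of_sub_nonneg_monotone ?_ ?_, isRobust_concat_iff.2
    ⟨hY, (tightExt_zero r Y l).le, fun n => (tightExt_succ r Y l n).le⟩⟩
  · rw [concat_sub_concat]
    exact concat_zero_nonneg hnonneg
  · rw [concat_sub_concat]
    exact monotone_concat_zero hnonneg hmono

theorem stmt1 (r : ℝ) (hr : 4 ≤ r) (Y : ℕ → ℝ) (l : ℕ) (hY : IsPartialStrategy Y l) :
    IsRExtendable r Y l ↔ IsTightlyRExtendable r Y l :=
  stmt1_general r hr Y l
end

section
/- Let r ≥ 4 and let μ be a finitely supported probability distribution on [1,∞). Then the infimum of cons(X,μ) over all r-robust bidding strategies X is attained; that is, there exists an r-robust bidding strategy X* such that cons(X*,μ) ≤ cons(Y,μ) for every r-robust bidding strategy Y. -/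
/-- The consistency of `X` with respect to a finitely supported prediction given
by points `μp i` with probabilities `p i`. -/
noncomputable def consFin (k : ℕ) (p μp : Fin k → ℝ) (X : ℕ → ℝ) : ℝ :=
  (∑ i, p i * cost X (μp i)) / (∑ i, p i * μp i)


/-!
After discarding the bids below `1`, which makes no target `u ≥ 1` more expensive, the `j`-th
bid of an `r`-robust strategy lies in `[1, r ^ (j + 1)]`. A minimizing sequence therefore has a
pointwise limit point `A` in this compact product of intervals. Robustness and monotonicity are
closed conditions, so `A` is a monotone robust sequence, hence unbounded, but it may repeat
values; keeping only its records gives a genuine robust strategy costing no more than `A`. The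
weighted cost is lower semicontinuous under pointwise limits (the bids before the target is
reached are strictly below it, an open condition), so `A` costs at most the infimum. The doubling
strategy `2 ^ i` shows that the infimum is taken over a nonempty set.
-/

open Filter Finset Topology

def robustStrategies (r : ℝ) : Set (ℕ → ℝ) := {X | IsBiddingStrategy X ∧ IsRobust r X}

section CostIdx

variable {X : ℕ → ℝ} {u : ℝ}

lemma le_apply_costIdx (h : ∃ i, u ≤ X i) : u ≤ X (costIdx X u) :=
  Nat.sInf_mem h

lemma apply_lt_of_lt_costIdx {j : ℕ} (h : j < costIdx X u) : X j < u :=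
  not_le.mp (Nat.notMem_of_lt_sInf h)

lemma cost_nonneg (hX : ∀ j, 0 ≤ X j) (u : ℝ) : 0 ≤ cost X u :=
  sum_nonneg fun j _ => hX j

lemma sum_range_add_eq_add_sum_shift (X : ℕ → ℝ) (n t : ℕ) :
    ∑ j ∈ range (n + t), X j = ∑ j ∈ range t, X j + ∑ j ∈ range n, X (j + t) := by
  rw [add_comm n t, sum_range_add]
  simp only [add_comm t]

lemma cost_eq_sum_add_cost_shift (hX : ∃ i, u ≤ X i) {t : ℕ} (ht : ∀ j < t, X j < u) :
    cost X u = ∑ j ∈ range t, X j + cost (fun i => X (i + t)) u := by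
  have hidx : costIdx (fun i => X (i + t)) u + t = costIdx X u :=
    Nat.sInf_add (le_of_not_gt fun hlt => (ht _ hlt).not_ge (le_apply_costIdx hX))
  rw [cost, ← hidx, add_right_comm, sum_range_add_eq_add_sum_shift]
  rfl

end CostIdx

lemma sum_range_comp_le_sum_range {f : ℕ → ℝ} (hf : ∀ s, 0 ≤ f s) {J : ℕ → ℕ}
    (hJ : StrictMono J) {m n : ℕ} (h : ∀ c < m, J c < n) :
    ∑ c ∈ range m, f (J c) ≤ ∑ s ∈ range n, f s := by
  rw [← sum_image (hJ.injective.injOn)]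
  refine sum_le_sum_of_subset_of_nonneg ?_ fun s _ _ => hf s
  intro s hs
  obtain ⟨c, hc, rfl⟩ := mem_image.mp hs
  exact mem_range.mpr (h c (mem_range.mp hc))

namespace IsRobust

variable {r : ℝ} {X : ℕ → ℝ}

lemma one_lt (hR : IsRobust r X) (hX : ∀ i, 0 < X i) : 1 < r := by
  have h := hR.2 0
  simp only [zero_add, sum_range_one] at h
  nlinarith [hX 0, hX 1]

lemma le_pow (hR : IsRobust r X) (hX : ∀ i, 0 < X i) (j : ℕ) : X j ≤ r ^ (j + 1) := by
  have hr := hR.one_lt hX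
  induction j with
  | zero => simpa using hR.1
  | succ j ih =>
    have hS : 0 ≤ ∑ i ∈ range (j + 1), X i := sum_nonneg fun i _ => (hX i).le
    calc X (j + 1) ≤ r * X j := by linarith [hR.2 j]
      _ ≤ r * r ^ (j + 1) := by gcongr
      _ = r ^ (j + 1 + 1) := by ring

/-- The partial sums grow linearly since all bids are `≥ 1`, yet `x_{i+1} > 0` keeps them
below `r * x_i`. -/
lemma tendsto_atTop (hR : IsRobust r X) (hX : ∀ i, 1 ≤ X i) : Tendsto X atTop atTop := by
  have hr : 0 < r := one_pos.trans (hR.one_lt fun i => one_pos.trans_le (hX i))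
  have hlin : ∀ t : ℕ, (t : ℝ) / r ≤ X t := by
    intro t
    have hsum := card_nsmul_le_sum (range (t + 1)) X 1 fun j _ => hX j
    simp only [card_range, nsmul_eq_mul, mul_one, Nat.cast_add, Nat.cast_one] at hsum
    rw [div_le_iff₀' hr]
    linarith [hR.2 t, hX (t + 1)]
  exact tendsto_atTop_mono hlin (tendsto_natCast_atTop_atTop.atTop_div_const hr)

end IsRobust

lemma isClosed_setOf_isRobust (r : ℝ) : IsClosed {X : ℕ → ℝ | IsRobust r X} := by
  simp only [IsRobust, Set.ofPred_and, Set.ofPred_forall]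
  refine (isClosed_le (continuous_apply 0) continuous_const).inter (isClosed_iInter fun i => ?_)
  exact isClosed_le (continuous_apply _) ((continuous_const.mul (continuous_apply i)).sub
    (continuous_finsetSum _ fun j _ => continuous_apply j))

lemma isBiddingStrategy_two_pow : IsBiddingStrategy fun i => (2 : ℝ) ^ i :=
  ⟨pow_right_strictMono₀ one_lt_two, fun i => by positivity,
    tendsto_pow_atTop_atTop_of_one_lt one_lt_two⟩

lemma isRobust_two_pow {r : ℝ} (hr : 4 ≤ r) : IsRobust r fun i => (2 : ℝ) ^ i := by
  refine ⟨by norm_num; linarith, fun i => ?_⟩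
  have hgeom : ∑ j ∈ range (i + 1), (2 : ℝ) ^ j = 2 ^ (i + 1) - 1 := by
    rw [geom_sum_eq (by norm_num)]; norm_num
  simp only [hgeom, pow_succ]
  nlinarith [pow_pos (two_pos : (0 : ℝ) < 2) i]

lemma IsRobust.exists_one_le_shift {r : ℝ} {Y : ℕ → ℝ} (hY : IsBiddingStrategy Y)
    (hR : IsRobust r Y) :
    ∃ W, IsBiddingStrategy W ∧ IsRobust r W ∧ 1 ≤ W 0 ∧ ∀ u, 1 ≤ u → cost W u ≤ cost Y u := by
  obtain ⟨hmono, hpos, htop⟩ := hY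
  have hreach : ∀ u, ∃ i, u ≤ Y i := fun u => (htop.eventually_ge_atTop u).exists
  set t := costIdx Y 1
  have hbelow : ∀ j < t, Y j < 1 := fun j hj => apply_lt_of_lt_costIdx hj
  refine ⟨fun i => Y (i + t), ⟨fun a b hab => hmono (by omega), fun i => hpos _,
    htop.comp (tendsto_add_atTop_nat t)⟩, ⟨?_, fun i => ?_⟩, ?_, fun u hu => ?_⟩
  · show Y (0 + t) ≤ r
    rw [zero_add]
    by_cases h0 : t = 0
    · simpa [h0] using hR.1
    · have hr := hR.one_lt hpos
      have hS : 0 ≤ ∑ j ∈ range t, Y j := sum_nonneg fun j _ => (hpos j).le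
      have h := hR.2 (t - 1)
      rw [Nat.sub_add_cancel (Nat.pos_of_ne_zero h0)] at h
      nlinarith [hbelow (t - 1) (by omega)]
  · have h := hR.2 (i + t)
    rw [show i + t + 1 = i + 1 + t by omega, sum_range_add_eq_add_sum_shift] at h
    have hS : 0 ≤ ∑ j ∈ range t, Y j := sum_nonneg fun j _ => (hpos j).le
    show Y (i + 1 + t) ≤ r * Y (i + t) - ∑ j ∈ range (i + 1), Y (j + t)
    linarith
  · simpa using le_apply_costIdx (hreach 1)
  · rw [cost_eq_sum_add_cost_shift (hreach u) fun j hj => (hbelow j hj).trans_le hu]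
    exact le_add_of_nonneg_left (sum_nonneg fun j _ => (hpos j).le)

/-- For monotone `A`, `recordIdx A c` is the first index at which `A` takes its `c`-th
distinct value. -/
noncomputable def recordIdx (A : ℕ → ℝ) : ℕ → ℕ
  | 0 => 0
  | c + 1 => sInf {t | A (recordIdx A c) < A t}

namespace recordIdx

variable {A : ℕ → ℝ}

lemma apply_le_of_lt_succ {c t : ℕ} (ht : t < recordIdx A (c + 1)) :
    A t ≤ A (recordIdx A c) :=
  not_lt.mp (Nat.notMem_of_lt_sInf ht)

lemma succ_le_of_lt {c t : ℕ} (ht : A (recordIdx A c) < A t) : recordIdx A (c + 1) ≤ t :=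
  Nat.sInf_le ht

lemma apply_lt_apply_succ (hA : Tendsto A atTop atTop) (c : ℕ) :
    A (recordIdx A c) < A (recordIdx A (c + 1)) :=
  Nat.sInf_mem ((hA.eventually_gt_atTop _).exists)

lemma strictMono (hmono : Monotone A) (hA : Tendsto A atTop atTop) :
    StrictMono (recordIdx A) :=
  strictMono_nat_of_lt_succ fun c => hmono.reflect_lt (apply_lt_apply_succ hA c)

end recordIdx

section Dedup

variable {r : ℝ} {A : ℕ → ℝ}

lemma isBiddingStrategy_comp_recordIdx (hmono : Monotone A) (hpos : ∀ i, 0 < A i)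
    (hA : Tendsto A atTop atTop) : IsBiddingStrategy (A ∘ recordIdx A) :=
  ⟨strictMono_nat_of_lt_succ (recordIdx.apply_lt_apply_succ hA), fun _ => hpos _,
    tendsto_atTop_mono (fun _ => hmono (recordIdx.strictMono hmono hA).le_apply) hA⟩

/-- `A` is constant from one record up to the index `t` just before the next one, so the
robustness inequality of `A` at `t` bounds the next bid of the deduplicated sequence. -/
lemma isRobust_comp_recordIdx (hmono : Monotone A) (hpos : ∀ i, 0 < A i)
    (hA : Tendsto A atTop atTop) (hR : IsRobust r A) : IsRobust r (A ∘ recordIdx A) := by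
  have hJ := recordIdx.strictMono hmono hA
  refine ⟨hR.1, fun c => ?_⟩
  have hstep := hJ (lt_add_one c)
  obtain ⟨t, ht⟩ := Nat.exists_eq_add_one.mpr ((Nat.zero_le _).trans_lt hstep)
  have hconst : A t = A (recordIdx A c) :=
    le_antisymm (recordIdx.apply_le_of_lt_succ (by omega)) (hmono (by omega))
  have hsum : ∑ i ∈ range (c + 1), A (recordIdx A i) ≤ ∑ s ∈ range (t + 1), A s :=
    sum_range_comp_le_sum_range (fun s => (hpos s).le) hJ fun i hi =>
      (hJ.monotone (Nat.lt_succ_iff.mp hi)).trans_lt (ht ▸ hstep)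
  show A (recordIdx A (c + 1)) ≤ r * A (recordIdx A c) - ∑ i ∈ range (c + 1), A (recordIdx A i)
  have h := hR.2 t
  rw [hconst] at h
  rw [ht]
  linarith

lemma cost_comp_recordIdx_le (hmono : Monotone A) (hpos : ∀ i, 0 < A i)
    (hA : Tendsto A atTop atTop) (u : ℝ) : cost (A ∘ recordIdx A) u ≤ cost A u := by
  have hreach : u ≤ A (costIdx A u) := le_apply_costIdx (hA.eventually_ge_atTop u).exists
  refine sum_range_comp_le_sum_range (fun s => (hpos s).le) (recordIdx.strictMono hmono hA)
    fun c hc => Nat.lt_succ_of_le ?_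
  rcases c with _ | c
  · exact Nat.zero_le _
  · have hbelow : A (recordIdx A c) < u := apply_lt_of_lt_costIdx (X := A ∘ recordIdx A) (by omega)
    exact recordIdx.succ_le_of_lt (hbelow.trans_le hreach)

end Dedup

lemma exists_mem_robustStrategies_cost_le {r : ℝ} {A : ℕ → ℝ} (hmono : Monotone A)
    (hA : ∀ i, 1 ≤ A i) (hR : IsRobust r A) :
    ∃ X ∈ robustStrategies r, ∀ u, cost X u ≤ cost A u := by
  have hpos : ∀ i, 0 < A i := fun i => one_pos.trans_le (hA i)
  have htop := hR.tendsto_atTop hA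
  exact ⟨A ∘ recordIdx A, ⟨isBiddingStrategy_comp_recordIdx hmono hpos htop,
    isRobust_comp_recordIdx hmono hpos htop hR⟩, cost_comp_recordIdx_le hmono hpos htop⟩

lemma IsRobust.mem_pi_Icc {r : ℝ} {W : ℕ → ℝ} (hR : IsRobust r W) (hW : IsBiddingStrategy W)
    (h1 : 1 ≤ W 0) : W ∈ Set.univ.pi fun j => Set.Icc 1 (r ^ (j + 1)) :=
  fun j _ => ⟨h1.trans (hW.1.monotone (Nat.zero_le j)), hR.le_pow hW.2.1 j⟩

noncomputable def weightedCost {ι : Type*} [Fintype ι] (p u : ι → ℝ) (X : ℕ → ℝ) : ℝ :=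
  ∑ i, p i * cost X (u i)

section WeightedCost

variable {ι : Type*} [Fintype ι] {p u : ι → ℝ}

lemma weightedCost_mono (hp : ∀ i, 0 ≤ p i) {X Y : ℕ → ℝ}
    (h : ∀ i, cost X (u i) ≤ cost Y (u i)) : weightedCost p u X ≤ weightedCost p u Y :=
  sum_le_sum fun i _ => mul_le_mul_of_nonneg_left (h i) (hp i)

lemma weightedCost_nonneg (hp : ∀ i, 0 ≤ p i) {X : ℕ → ℝ} (hX : ∀ j, 0 ≤ X j) :
    0 ≤ weightedCost p u X :=
  sum_nonneg fun i _ => mul_nonneg (hp i) (cost_nonneg hX _)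

variable {α : Type*} {l : Filter α} {W : α → ℕ → ℝ} {A : ℕ → ℝ}

/-- The bids of `A` before it reaches `v` are `< v`, an open condition, so eventually `W n` has
not reached `v` by then either. -/
lemma eventually_sum_range_costIdx_le_cost (hWA : Tendsto W l (𝓝 A))
    (hW : ∀ n, IsBiddingStrategy (W n)) (v : ℝ) :
    ∀ᶠ n in l, ∑ j ∈ range (costIdx A v + 1), W n j ≤ cost (W n) v := by
  have hbelow : ∀ᶠ n in l, ∀ j ∈ range (costIdx A v), W n j < v :=
    (eventually_all_finset _).mpr fun j hj =>
      (tendsto_pi_nhds.mp hWA j).eventually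
        (eventually_lt_nhds (apply_lt_of_lt_costIdx (mem_range.mp hj)))
  filter_upwards [hbelow] with n hn
  have hreach : v ≤ W n (costIdx (W n) v) :=
    le_apply_costIdx ((hW n).2.2.eventually_ge_atTop v).exists
  have hidx : costIdx A v ≤ costIdx (W n) v :=
    le_of_not_gt fun hlt => (hn _ (mem_range.mpr hlt)).not_ge hreach
  exact sum_le_sum_of_subset_of_nonneg (range_subset_range.mpr (by omega))
    fun j _ _ => ((hW n).2.1 j).le

lemma weightedCost_le_of_tendsto [l.NeBot] (hp : ∀ i, 0 ≤ p i) (hWA : Tendsto W l (𝓝 A))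
    (hW : ∀ n, IsBiddingStrategy (W n)) {I : ℝ}
    (hI : Tendsto (fun n => weightedCost p u (W n)) l (𝓝 I)) : weightedCost p u A ≤ I := by
  refine le_of_tendsto_of_tendsto (tendsto_finsetSum _ fun i _ =>
    (tendsto_finsetSum _ fun j _ => tendsto_pi_nhds.mp hWA j).const_mul (p i)) hI ?_
  filter_upwards [eventually_all.mpr fun i => eventually_sum_range_costIdx_le_cost hWA hW (u i)]
    with n hn
  exact sum_le_sum fun i _ => mul_le_mul_of_nonneg_left (hn i) (hp i)

theorem exists_isMinOn_weightedCost {r : ℝ} (hp : ∀ i, 0 ≤ p i) (hu : ∀ i, 1 ≤ u i)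
    (hne : (robustStrategies r).Nonempty) :
    ∃ X ∈ robustStrategies r, IsMinOn (weightedCost p u) (robustStrategies r) X := by
  set S := weightedCost p u '' robustStrategies r
  have hS : BddBelow S := ⟨0, by
    rintro _ ⟨Y, hY, rfl⟩
    exact weightedCost_nonneg hp fun j => (hY.1.2.1 j).le⟩
  obtain ⟨v, -, hv, hvS⟩ := exists_seq_tendsto_sInf (hne.image _) hS
  choose Y hY hYv using hvS
  choose W hW hWR hW1 hWY using fun n => (hY n).2.exists_one_le_shift (hY n).1
  have hlim : Tendsto (fun n => weightedCost p u (W n)) atTop (𝓝 (sInf S)) :=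
    tendsto_of_tendsto_of_tendsto_of_le_of_le tendsto_const_nhds hv
      (fun n => csInf_le hS ⟨W n, ⟨hW n, hWR n⟩, rfl⟩)
      (fun n => hYv n ▸ weightedCost_mono hp fun i => hWY n _ (hu i))
  obtain ⟨A, hA, φ, hφ, hWA⟩ := (isCompact_univ_pi fun j => isCompact_Icc).tendsto_subseq
    fun n => (hWR n).mem_pi_Icc (hW n) (hW1 n)
  have hAR : IsRobust r A := (isClosed_setOf_isRobust r).mem_of_tendsto hWA
    (Eventually.of_forall fun n => hWR (φ n))
  have hAmono : Monotone A := isClosed_monotone.mem_of_tendsto hWA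
    (Eventually.of_forall fun n => (hW (φ n)).1.monotone)
  obtain ⟨X, hX, hXA⟩ :=
    exists_mem_robustStrategies_cost_le hAmono (fun j => (hA j (Set.mem_univ j)).1) hAR
  refine ⟨X, hX, fun Z hZ => ?_⟩
  calc weightedCost p u X ≤ weightedCost p u A := weightedCost_mono hp fun i => hXA _
    _ ≤ sInf S := weightedCost_le_of_tendsto hp hWA (fun n => hW (φ n)) (hlim.comp hφ.tendsto_atTop)
    _ ≤ weightedCost p u Z := csInf_le hS ⟨Z, hZ, rfl⟩

end WeightedCost

theorem stmt3_general (r : ℝ) (hr : 4 ≤ r) (k : ℕ)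
    (p μp : Fin k → ℝ) (hp : ∀ i, 0 ≤ p i) (hμ : ∀ i, 1 ≤ μp i) :
    ∃ X : ℕ → ℝ, IsBiddingStrategy X ∧ IsRobust r X ∧
      ∀ Y : ℕ → ℝ, IsBiddingStrategy Y → IsRobust r Y →
        consFin k p μp X ≤ consFin k p μp Y := by
  obtain ⟨X, ⟨hX, hXR⟩, hmin⟩ := exists_isMinOn_weightedCost hp hμ
    ⟨_, isBiddingStrategy_two_pow, isRobust_two_pow hr⟩
  refine ⟨X, hX, hXR, fun Y hY hYR => div_le_div_of_nonneg_right (hmin ⟨hY, hYR⟩) ?_⟩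
  exact sum_nonneg fun i _ => mul_nonneg (hp i) (zero_le_one.trans (hμ i))

theorem stmt3 (r : ℝ) (hr : 4 ≤ r) (k : ℕ) (hk : 0 < k)
    (p μp : Fin k → ℝ) (hp : ∀ i, 0 ≤ p i) (hps : ∑ i, p i = 1) (hμ : ∀ i, 1 ≤ μp i) :
    ∃ X : ℕ → ℝ, IsBiddingStrategy X ∧ IsRobust r X ∧
      ∀ Y : ℕ → ℝ, IsBiddingStrategy Y → IsRobust r Y →
        consFin k p μp X ≤ consFin k p μp Y :=
  stmt3_general r hr k p μp hp hμ
end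

section
/- For the randomized bidding strategy whose bids are x_i = e^{i+s} with s drawn uniformly from [0,1), and for every target u ≥ 1, the expected cost satisfies ∫_0^1 cost((e^{i+s})_{i≥0}, u) ds = e·u − 1; equivalently, the expected performance ratio equals e − 1/u. -/
open Real MeasureTheory Set

section FloorRing

variable {α : Type*} [Field α] [LinearOrder α] [IsStrictOrderedRing α] [FloorRing α] {a s : α}

theorem Int.ceil_sub_eq_floor_add_one (hs : s ∈ Ioo 0 (Int.fract a)) : ⌈a - s⌉ = ⌊a⌋ + 1 := by
  have := Int.lt_floor_add_one a
  rw [Int.fract] at hs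
  rw [Int.ceil_eq_iff]
  push_cast
  constructor <;> linarith [hs.1, hs.2]

theorem Int.ceil_sub_eq_floor (hs : s ∈ Ioo (Int.fract a) 1) : ⌈a - s⌉ = ⌊a⌋ := by
  have := Int.floor_le a
  rw [Int.fract] at hs
  rw [Int.ceil_eq_iff]
  constructor <;> linarith [hs.1, hs.2]

end FloorRing

section Unrolling

variable {E : Type*} {f : ℝ → E}

theorem eqOn_comp_add_ceil_sub_left (a : ℝ) :
    EqOn (fun s => f (s + ⌈a - s⌉)) (fun s => f (s + (⌊a⌋ + 1))) (uIoo 0 (Int.fract a)) := by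
  intro s hs
  rw [uIoo_of_le (Int.fract_nonneg a)] at hs
  simp only [Int.ceil_sub_eq_floor_add_one hs, Int.cast_add, Int.cast_one]

theorem eqOn_comp_add_ceil_sub_right (a : ℝ) :
    EqOn (fun s => f (s + ⌈a - s⌉)) (fun s => f (s + ⌊a⌋)) (uIoo (Int.fract a) 1) := by
  intro s hs
  rw [uIoo_of_le (Int.fract_lt_one a).le] at hs
  simp only [Int.ceil_sub_eq_floor hs]

variable [NormedAddCommGroup E]

theorem intervalIntegrable_comp_add_ceil_sub_left (hf : Continuous f) (a : ℝ) :
    IntervalIntegrable (fun s => f (s + ⌈a - s⌉)) volume 0 (Int.fract a) :=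
  ((hf.comp (continuous_add_const _)).intervalIntegrable _ _).congr_uIoo
    (eqOn_comp_add_ceil_sub_left a).symm

theorem intervalIntegrable_comp_add_ceil_sub_right (hf : Continuous f) (a : ℝ) :
    IntervalIntegrable (fun s => f (s + ⌈a - s⌉)) volume (Int.fract a) 1 :=
  ((hf.comp (continuous_add_const _)).intervalIntegrable _ _).congr_uIoo
    (eqOn_comp_add_ceil_sub_right a).symm

theorem intervalIntegrable_comp_add_ceil_sub (hf : Continuous f) (a : ℝ) :
    IntervalIntegrable (fun s => f (s + ⌈a - s⌉)) volume 0 1 :=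
  (intervalIntegrable_comp_add_ceil_sub_left hf a).trans
    (intervalIntegrable_comp_add_ceil_sub_right hf a)

open intervalIntegral in
theorem integral_comp_add_ceil_sub [NormedSpace ℝ E] (hf : Continuous f) (a : ℝ) :
    ∫ s in (0 : ℝ)..1, f (s + ⌈a - s⌉) = ∫ y in a..a + 1, f y := by
  calc ∫ s in (0 : ℝ)..1, f (s + ⌈a - s⌉)
      = (∫ s in (0 : ℝ)..Int.fract a, f (s + ⌈a - s⌉)) + ∫ s in Int.fract a..1, f (s + ⌈a - s⌉) :=
        (integral_add_adjacent_intervals (intervalIntegrable_comp_add_ceil_sub_left hf a)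
          (intervalIntegrable_comp_add_ceil_sub_right hf a)).symm
    _ = (∫ s in (0 : ℝ)..Int.fract a, f (s + (⌊a⌋ + 1))) + ∫ s in Int.fract a..1, f (s + ⌊a⌋) := by
        rw [integral_congr_uIoo (eqOn_comp_add_ceil_sub_left a),
          integral_congr_uIoo (eqOn_comp_add_ceil_sub_right a)]
    _ = (∫ y in ⌊a⌋ + 1..a + 1, f y) + ∫ y in a..⌊a⌋ + 1, f y := by
        rw [integral_comp_add_right, integral_comp_add_right, zero_add, ← add_assoc,
          Int.fract_add_floor, add_comm 1]
    _ = ∫ y in a..a + 1, f y := by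
        rw [add_comm, integral_add_adjacent_intervals (hf.intervalIntegrable _ _)
          (hf.intervalIntegrable _ _)]

end Unrolling

theorem sum_range_exp_add (n : ℕ) (s : ℝ) :
    ∑ j ∈ Finset.range n, exp (j + s) = (exp (s + n) - exp s) / (exp 1 - 1) := by
  have he : exp 1 ≠ 1 := by simp
  simp_rw [exp_add, ← exp_one_pow, ← Finset.sum_mul, geom_sum_eq he]
  ring

theorem costIdx_exp_add {u : ℝ} (hu : 0 < u) (s : ℝ) :
    costIdx (fun i : ℕ => exp (i + s)) u = ⌈log u - s⌉₊ := by
  have : {i : ℕ | u ≤ exp (i + s)} = Ici ⌈log u - s⌉₊ := by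
    ext i
    rw [mem_ofPred_eq, mem_Ici, Nat.ceil_le, sub_le_iff_le_add, log_le_iff_le_exp hu]
  rw [costIdx, this, csInf_Ici]

theorem cost_exp_add {u : ℝ} (hu : 0 < u) (s : ℝ) :
    cost (fun i : ℕ => exp (i + s)) u =
      (exp 1 * exp (s + ⌈log u - s⌉₊) - exp s) / (exp 1 - 1) := by
  rw [cost, costIdx_exp_add hu, sum_range_exp_add, ← exp_add]
  push_cast
  ring_nf

theorem integral_cost_exp_add {u : ℝ} (hu : 1 ≤ u) :
    ∫ s in (0 : ℝ)..1, cost (fun i : ℕ => exp (i + s)) u = exp 1 * u - 1 := by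
  have hu0 : 0 < u := by linarith
  have hcost : EqOn (fun s => cost (fun i : ℕ => exp (i + s)) u)
      (fun s => (exp 1 * exp (s + ⌈log u - s⌉) - exp s) / (exp 1 - 1)) (uIoo 0 1) := by
    intro s hs
    rw [uIoo_of_le zero_le_one] at hs
    have : -1 < log u - s := by linarith [log_nonneg hu, hs.2]
    simp only [cost_exp_add hu0, natCast_ceil_eq_intCast_ceil_of_neg_one_lt this]
  have he : exp 1 - 1 ≠ 0 := sub_ne_zero.mpr (by simp)
  rw [intervalIntegral.integral_congr_uIoo hcost, intervalIntegral.integral_div,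
    intervalIntegral.integral_sub
      ((intervalIntegrable_comp_add_ceil_sub continuous_exp _).const_mul _)
      (continuous_exp.intervalIntegrable _ _),
    intervalIntegral.integral_const_mul, integral_comp_add_ceil_sub continuous_exp, integral_exp,
    integral_exp, exp_add, exp_log hu0, exp_zero]
  field_simp

theorem stmt5 (u : ℝ) (hu : 1 ≤ u) :
    (∫ s in (0:ℝ)..1, cost (fun i : ℕ => Real.exp ((i : ℝ) + s)) u) =
        Real.exp 1 * u - 1 ∧
    (∫ s in (0:ℝ)..1, cost (fun i : ℕ => Real.exp ((i : ℝ) + s)) u) / u =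
        Real.exp 1 - 1 / u := by
  have hu0 : u ≠ 0 := by positivity
  refine ⟨integral_cost_exp_add hu, ?_⟩
  rw [integral_cost_exp_add hu]
  field_simp
end

section
/- Let a > 1, δ ∈ [0,1), λ ∈ [1,a), j ∈ ℕ, and set û = λ·a^{j+δ}. For the randomized strategy R_{δ,a} whose bids are x_i = λ·a^{i+s} with s drawn uniformly from [δ,1), the consistency satisfies (1/((1−δ)·û)) · ∫_δ^1 cost((λ a^{i+s})_{i≥0}, û) ds ≤ a(a−a^δ) / (a^δ (a−1)(1−δ) ln a). -/
open Finset

lemma costIdx_eq_of_lt_of_le {X : ℕ → ℝ} {u : ℝ} {j : ℕ} (hj : u ≤ X j)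
    (hlt : ∀ i < j, X i < u) : costIdx X u = j :=
  le_antisymm (Nat.sInf_le hj) <| le_csInf ⟨j, hj⟩ fun i hi => by
    by_contra! h
    exact (hlt i h).not_ge hi

section GeometricBids

variable {a lam s δ : ℝ}

lemma costIdx_geometric (ha : 1 < a) (hlam : 0 < lam) (hδs : δ ≤ s) (hs : s < δ + 1)
    (j : ℕ) :
    costIdx (fun i : ℕ => lam * a ^ ((i : ℝ) + s)) (lam * a ^ ((j : ℝ) + δ)) = j := by
  apply costIdx_eq_of_lt_of_le
  · gcongr
    exact ha.le
  · intro i hi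
    have hij : (i : ℝ) + 1 ≤ j := by exact_mod_cast hi
    exact mul_lt_mul_of_pos_left (Real.rpow_lt_rpow_of_exponent_lt ha (by linarith)) hlam

lemma cost_geometric (ha : 1 < a) (hlam : 0 < lam) (hδs : δ ≤ s) (hs : s < δ + 1)
    (j : ℕ) :
    cost (fun i : ℕ => lam * a ^ ((i : ℝ) + s)) (lam * a ^ ((j : ℝ) + δ)) =
      lam * (∑ i ∈ range (j + 1), a ^ i) * a ^ s := by
  rw [cost, costIdx_geometric ha hlam hδs hs, mul_sum, sum_mul]
  refine sum_congr rfl fun i _ => ?_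
  rw [Real.rpow_add (by linarith), Real.rpow_natCast, mul_assoc]

end GeometricBids

lemma integral_const_rpow {a : ℝ} (ha : 0 < a) (ha1 : a ≠ 1) (x y : ℝ) :
    ∫ s in x..y, a ^ s = (a ^ y - a ^ x) / Real.log a := by
  have hlog : Real.log a ≠ 0 := Real.log_ne_zero_of_pos_of_ne_one ha ha1
  have hderiv (s : ℝ) : HasDerivAt (fun s => a ^ s / Real.log a) (a ^ s) s := by
    have := (Real.hasStrictDerivAt_const_rpow ha s).hasDerivAt.div_const (Real.log a)
    rwa [mul_div_cancel_right₀ _ hlog] at this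
  rw [intervalIntegral.integral_eq_sub_of_hasDerivAt (fun s _ => hderiv s)
    ((Real.continuous_const_rpow ha.ne').intervalIntegrable x y), sub_div]

theorem stmt6 (a δ lam : ℝ) (j : ℕ) (ha : 1 < a) (hδ : δ ∈ Set.Ico (0:ℝ) 1)
    (hlam : lam ∈ Set.Ico (1:ℝ) a) :
    (1 / ((1 - δ) * (lam * a ^ ((j : ℝ) + δ)))) *
        (∫ s in δ..1,
          cost (fun i : ℕ => lam * a ^ ((i : ℝ) + s)) (lam * a ^ ((j : ℝ) + δ))) ≤
      a * (a - a ^ δ) / (a ^ δ * (a - 1) * (1 - δ) * Real.log a) := by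
  obtain ⟨hδ0, hδ1⟩ := hδ
  have ha0 : 0 < a := by linarith
  have hlam0 : 0 < lam := by linarith [hlam.1]
  set G := ∑ i ∈ range (j + 1), a ^ i
  have hcost : ∫ s in δ..1,
      cost (fun i : ℕ => lam * a ^ ((i : ℝ) + s)) (lam * a ^ ((j : ℝ) + δ)) =
        lam * G * ((a - a ^ δ) / Real.log a) := by
    rw [intervalIntegral.integral_congr_Ioo_of_le hδ1.le
        fun s hs => cost_geometric ha hlam0 hs.1.le (by linarith [hs.2]) j,
      intervalIntegral.integral_const_mul, integral_const_rpow ha0 ha.ne', Real.rpow_one]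
  have hG : G * (a - 1) / a ^ j ≤ a := by
    rw [geom_sum_mul, div_le_iff₀ (by positivity), ← pow_succ']
    linarith
  have hδa : a ^ δ < a := by simpa using Real.rpow_lt_rpow_of_exponent_lt ha hδ1
  have hlog : 0 < Real.log a := Real.log_pos ha
  rw [hcost, Real.rpow_add ha0, Real.rpow_natCast]
  calc 1 / ((1 - δ) * (lam * (a ^ j * a ^ δ))) * (lam * G * ((a - a ^ δ) / Real.log a))
      = G * (a - 1) / a ^ j * ((a - a ^ δ) / (a ^ δ * (a - 1) * (1 - δ) * Real.log a)) := by
        have : a - 1 ≠ 0 := by linarith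
        have : 1 - δ ≠ 0 := by linarith
        field_simp
    _ ≤ a * ((a - a ^ δ) / (a ^ δ * (a - 1) * (1 - δ) * Real.log a)) := by
        gcongr
    _ = a * (a - a ^ δ) / (a ^ δ * (a - 1) * (1 - δ) * Real.log a) := mul_div_assoc' _ _ _
end

section
/- Let ε ∈ (0,1), R = exp((1−ε)/ε), and let D_ε be the probability measure on [1,R] with density t ↦ ε/t on [1,R) together with an atom of mass ε at R. Let n ∈ ℕ and let 1 ≤ x_0 < x_1 < ⋯ < x_n be reals with x_{n−1} < R ≤ x_n. Then ∫ cost(X,u)/u dD_ε(u) ≥ (1−ε)·e, where X = (x_i)_{i=0}^{n}. -/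
/-!
Writing `x (-1) := 1`, the bid `x j` is paid exactly for the targets `u > x (j - 1)`, and `D_ε`
is built so that `∫_{u > c} u⁻¹ dD_ε(u) = ε / c` for every `1 ≤ c < R`. Hence the integral equals
`ε ∑ x j / x (j - 1)`. Since `e log p ≤ p`, each ratio is at least `e` times its logarithm, and
the logarithms telescope to `log (x n) ≥ log R = (1 - ε) / ε`.
-/

open MeasureTheory

/-- The measure `D_ε` on `[1,R]`: density `t ↦ ε / t` on `[1,R)` together with
an atom of mass `ε` at `R`. -/
noncomputable def Deps (ε R : ℝ) : Measure ℝ :=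
  ((volume.restrict (Set.Ico (1:ℝ) R)).withDensity fun t => ENNReal.ofReal (ε / t))
    + (ENNReal.ofReal ε) • Measure.dirac R

open Set
open scoped ENNReal

section Cost

variable {x : ℕ → ℝ} {u : ℝ} {n : ℕ}

lemma le_costIdx_iff (hu : u ≤ x n) {j : ℕ} : j ≤ costIdx x u ↔ ∀ i < j, x i < u := by
  refine ⟨fun hj i hi ↦ not_le.1 (Nat.notMem_of_lt_sInf (hi.trans_le hj)), fun h ↦ ?_⟩
  by_contra! hlt
  exact (h _ hlt).not_ge (Nat.sInf_mem (⟨n, hu⟩ : {i | u ≤ x i}.Nonempty))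

lemma costIdx_le (hu : u ≤ x n) : costIdx x u ≤ n := Nat.sInf_le hu

lemma cost_eq_sum_ite (hu : u ≤ x n) :
    cost x u = ∑ j ∈ Finset.range (n + 1), if ∀ i < j, x i < u then x j else 0 := by
  simp_rw [← le_costIdx_iff hu, ← Finset.sum_filter]
  have hle := costIdx_le hu
  unfold cost
  congr 1
  ext j
  simp only [Finset.mem_range, Finset.mem_filter]
  omega

def prevBid (x : ℕ → ℝ) : ℕ → ℝ
  | 0 => 1
  | j + 1 => x j

lemma one_le_prevBid (hx0 : 1 ≤ x 0) (hx : MonotoneOn x (Iic n)) {j : ℕ} (hj : j ≤ n + 1) :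
    1 ≤ prevBid x j := by
  cases j with
  | zero => exact le_rfl
  | succ j => exact hx0.trans (hx (mem_Iic.2 n.zero_le) (mem_Iic.2 (by omega)) j.zero_le)

lemma prevBid_lt {R : ℝ} (hR : 1 < R) (hprev : ∀ i < n, x i < R) {j : ℕ} (hj : j ≤ n) :
    prevBid x j < R := by
  cases j with
  | zero => exact hR
  | succ j => exact hprev j (by omega)

lemma forall_lt_iff_prevBid_lt (hx : MonotoneOn x (Iic n)) (hu : 1 < u) {j : ℕ}
    (hj : j ≤ n + 1) : (∀ i < j, x i < u) ↔ prevBid x j < u := by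
  cases j with
  | zero => simp [prevBid, hu]
  | succ j =>
    exact ⟨fun h ↦ h j j.lt_add_one, fun h i hi ↦
      (hx (mem_Iic.2 (by omega)) (mem_Iic.2 (by omega)) (Nat.le_of_lt_add_one hi)).trans_lt h⟩

lemma cost_div_eq_sum_indicator (hx : MonotoneOn x (Iic n)) (hu1 : 1 < u) (hu : u ≤ x n) :
    cost x u / u =
      ∑ j ∈ Finset.range (n + 1), x j * (Ioi (prevBid x j)).indicator (·⁻¹) u := by
  rw [cost_eq_sum_ite hu, Finset.sum_div]
  refine Finset.sum_congr rfl fun j hj ↦ ?_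
  have hj : j ≤ n + 1 := by have := Finset.mem_range.1 hj; omega
  simp only [forall_lt_iff_prevBid_lt hx hu1 hj]
  by_cases h : prevBid x j < u
  · simp [h, div_eq_mul_inv]
  · simp [h]

end Cost

lemma exp_one_mul_log_le_self {p : ℝ} (hp : 0 < p) : Real.exp 1 * Real.log p ≤ p := by
  have h := Real.add_one_le_exp (Real.log p - 1)
  rw [Real.exp_sub, Real.exp_log hp, sub_add_cancel, le_div_iff₀ (Real.exp_pos 1)] at h
  linarith

lemma exp_one_mul_log_le_sum_div {y : ℕ → ℝ} {m : ℕ} (hy : ∀ j ≤ m, 0 < y j) :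
    Real.exp 1 * Real.log (y m / y 0) ≤ ∑ j ∈ Finset.range m, y (j + 1) / y j := by
  induction m with
  | zero => simp
  | succ m ih =>
    have h0 := hy 0 (by omega)
    have hm := hy m (by omega)
    have hm1 := hy (m + 1) le_rfl
    have hlog : Real.log (y (m + 1) / y 0) =
        Real.log (y m / y 0) + Real.log (y (m + 1) / y m) := by
      rw [← Real.log_mul (by positivity) (by positivity)]
      field_simp
    rw [hlog, mul_add, Finset.sum_range_succ]
    exact add_le_add (ih fun j hj ↦ hy j (by omega)) (exp_one_mul_log_le_self (by positivity))

lemma integral_inv_sq {a b : ℝ} (ha : 0 < a) (hab : a ≤ b) :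
    ∫ u in a..b, (u ^ 2)⁻¹ = a⁻¹ - b⁻¹ := by
  have hpos : ∀ u ∈ uIcc a b, 0 < u := fun u hu ↦
    ha.trans_le (by rw [uIcc_of_le hab] at hu; exact hu.1)
  rw [intervalIntegral.integral_eq_sub_of_hasDerivAt (f := fun u ↦ -u⁻¹) (f' := fun u ↦ (u ^ 2)⁻¹)
    (fun u hu ↦ by simpa using (hasDerivAt_inv (hpos u hu).ne').fun_neg)
    (ContinuousOn.intervalIntegrable fun u hu ↦
      ((continuousAt_id.pow 2).inv₀ (pow_ne_zero 2 (hpos u hu).ne')).continuousWithinAt)]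
  ring

section Deps

variable {ε R : ℝ}

instance isFiniteMeasure_deps : IsFiniteMeasure (Deps ε R) := by
  have hint : IntegrableOn (fun t : ℝ ↦ ε / t) (Ico 1 R) :=
    ((continuousOn_const.div continuousOn_id fun t ht ↦
      (one_pos.trans_le ht.1).ne').integrableOn_Icc).mono_set Ico_subset_Icc_self
  have := isFiniteMeasure_withDensity_ofReal hint.hasFiniteIntegral
  have := (Measure.dirac R).smul_finite (ENNReal.ofReal_ne_top (r := ε))
  unfold Deps
  infer_instance

lemma ae_mem_Ioc_deps (hR : 1 < R) : ∀ᵐ u ∂Deps ε R, u ∈ Ioc 1 R := by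
  rw [Deps, ae_add_measure_iff, Measure.restrict_congr_set Ico_ae_eq_Ioc]
  exact ⟨(withDensity_absolutelyContinuous _ _).ae_le (ae_restrict_mem measurableSet_Ioc),
    Measure.ae_smul_measure ((ae_dirac_iff measurableSet_Ioc).2 ⟨hR, le_rfl⟩) _⟩

lemma integrable_indicator_Ioi_inv_deps {c : ℝ} (hc : 0 < c) :
    Integrable ((Ioi c).indicator (·⁻¹)) (Deps ε R) := by
  refine Integrable.of_bound (measurable_inv.indicator measurableSet_Ioi).aestronglyMeasurable
    c⁻¹ (ae_of_all _ fun u ↦ ?_)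
  by_cases hu : u ∈ Ioi c
  · rw [indicator_of_mem hu, Real.norm_of_nonneg (inv_nonneg.2 (hc.trans hu).le)]
    exact inv_anti₀ hc hu.le
  · rw [indicator_of_notMem hu, norm_zero]
    exact inv_nonneg.2 hc.le

lemma integral_indicator_Ioi_inv_deps (hε : 0 ≤ ε) {c : ℝ} (hc : 1 ≤ c) (hcR : c < R) :
    ∫ u, (Ioi c).indicator (·⁻¹) u ∂Deps ε R = ε / c := by
  have hc0 : 0 < c := one_pos.trans_le hc
  have hint := integrable_indicator_Ioi_inv_deps (ε := ε) (R := R) hc0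
  have hdens : (fun t ↦ ENNReal.ofReal (ε / t)) = fun t ↦ ((ε / t).toNNReal : ℝ≥0∞) := rfl
  have hsmul : (fun t : ℝ ↦ (ε / t).toNNReal • (Ioi c).indicator (·⁻¹) t) =
      (Ioi c).indicator (fun t ↦ ε * (t ^ 2)⁻¹) := by
    funext t
    by_cases ht : t ∈ Ioi c
    · simp only [indicator_of_mem ht, NNReal.smul_def, smul_eq_mul,
        Real.coe_toNNReal _ (div_nonneg hε (hc0.trans ht).le)]
      ring
    · simp [ht]
  have hset : Ico 1 R ∩ Ioi c = Ioo c R := by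
    ext t
    exact ⟨fun h ↦ ⟨h.2, h.1.2⟩, fun h ↦ ⟨⟨hc.trans h.1.le, h.2⟩, h.1⟩⟩
  rw [Deps, integral_add_measure hint.left_of_add_measure hint.right_of_add_measure, hdens,
    integral_withDensity_eq_integral_smul (f := fun t ↦ (ε / t).toNNReal) (by fun_prop), hsmul,
    setIntegral_indicator measurableSet_Ioi, hset, ← integral_Ioc_eq_integral_Ioo,
    ← intervalIntegral.integral_of_le hcR.le, intervalIntegral.integral_const_mul,
    integral_inv_sq hc0 hcR.le, integral_smul_measure, integral_dirac,
    indicator_of_mem (show R ∈ Ioi c from hcR), ENNReal.toReal_ofReal hε, smul_eq_mul]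
  field_simp
  ring

lemma integral_cost_div_deps {x : ℕ → ℝ} {n : ℕ} (hε : 0 ≤ ε) (hR : 1 < R) (hx0 : 1 ≤ x 0)
    (hx : MonotoneOn x (Iic n)) (hxn : R ≤ x n) (hprev : ∀ i < n, x i < R) :
    ∫ u, cost x u / u ∂Deps ε R = ε * ∑ j ∈ Finset.range (n + 1), x j / prevBid x j := by
  have hcost : (fun u ↦ cost x u / u) =ᵐ[Deps ε R]
      fun u ↦ ∑ j ∈ Finset.range (n + 1), x j * (Ioi (prevBid x j)).indicator (·⁻¹) u :=
    (ae_mem_Ioc_deps hR).mono fun u hu ↦ cost_div_eq_sum_indicator hx hu.1 (hu.2.trans hxn)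
  have hrange : ∀ j ∈ Finset.range (n + 1), j ≤ n := fun j hj ↦ Nat.lt_add_one_iff.1
    (Finset.mem_range.1 hj)
  rw [integral_congr_ae hcost, integral_finsetSum _ fun j hj ↦
      ((integrable_indicator_Ioi_inv_deps
        (one_pos.trans_le (one_le_prevBid hx0 hx (hrange j hj).step))).const_mul _),
    Finset.mul_sum]
  refine Finset.sum_congr rfl fun j hj ↦ ?_
  rw [integral_const_mul, integral_indicator_Ioi_inv_deps hε
    (one_le_prevBid hx0 hx (hrange j hj).step) (prevBid_lt hR hprev (hrange j hj))]
  ring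

end Deps

theorem stmt8 (ε : ℝ) (hε : ε ∈ Set.Ioo (0:ℝ) 1) (R : ℝ)
    (hR : R = Real.exp ((1 - ε) / ε))
    (n : ℕ) (x : ℕ → ℝ) (hx0 : 1 ≤ x 0) (hmono : ∀ i, i < n → x i < x (i + 1))
    (hxn : R ≤ x n) (hprev : ∀ i, i < n → x i < R) :
    (1 - ε) * Real.exp 1 ≤ ∫ u, cost x u / u ∂(Deps ε R) := by
  obtain ⟨hε0, hε1⟩ := hε
  have hR1 : 1 < R := hR ▸ Real.one_lt_exp_iff.2 (div_pos (sub_pos.2 hε1) hε0)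
  have hx : MonotoneOn x (Iic n) :=
    (strictMonoOn_Iic_of_lt_succ fun i hi ↦ by simpa using hmono i hi).monotoneOn
  have hlog := exp_one_mul_log_le_sum_div (y := prevBid x) (m := n + 1)
    fun j hj ↦ one_pos.trans_le (one_le_prevBid hx0 hx hj)
  simp only [prevBid.eq_1, prevBid.eq_2, div_one] at hlog
  rw [integral_cost_div_deps hε0.le hR1 hx0 hx hxn hprev]
  calc (1 - ε) * Real.exp 1 = ε * (Real.exp 1 * Real.log R) := by
        rw [hR, Real.log_exp]
        field_simp
    _ ≤ ε * (Real.exp 1 * Real.log (x n)) := by gcongr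
    _ ≤ ε * ∑ j ∈ Finset.range (n + 1), x j / prevBid x j := by gcongr
end

section
/- Let ε ∈ (0,1) and R = exp((1−ε)/ε). For every n ∈ ℕ and all positive reals r_0, r_1, …, r_n with Π_{i=0}^{n} r_i ≥ R, it holds that ε · Σ_{i=0}^{n} r_i ≥ (1−ε) · R^{1/(n+1)} / ln(R^{1/(n+1)}) ≥ (1−ε)·e. -/
/-!
Writing `N = n + 1` and `t = log R / N = (1 - ε) / (ε N)`, the middle quantity is
`(1 - ε) eᵗ / t = ε N eᵗ = ε N R^{1/N}`. AM-GM bounds `N (∏ rᵢ)^{1/N} ≤ ∑ rᵢ`, which gives the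
first inequality, and the second is `e t ≤ eᵗ`, the tangent line of `exp` at `1`.
-/

open Real Finset

theorem Real.card_mul_prod_rpow_inv_card_le_sum {ι : Type*} (s : Finset ι) (f : ι → ℝ)
    (hf : ∀ i ∈ s, 0 ≤ f i) :
    (#s : ℝ) * (∏ i ∈ s, f i) ^ (#s : ℝ)⁻¹ ≤ ∑ i ∈ s, f i := by
  rcases s.eq_empty_or_nonempty with rfl | hs
  · simp
  have hcard : (0 : ℝ) < #s := by exact_mod_cast hs.card_pos
  have amgm := geom_mean_le_arith_mean s (fun _ ↦ 1) f (fun _ _ ↦ zero_le_one)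
    (by simpa using hs.card_pos) hf
  simp only [rpow_one, one_mul, sum_const, nsmul_eq_mul, mul_one] at amgm
  rwa [le_div_iff₀ hcard, mul_comm] at amgm

theorem stmt10 (ε : ℝ) (hε : ε ∈ Set.Ioo (0:ℝ) 1) (R : ℝ)
    (hR : R = Real.exp ((1 - ε) / ε))
    (n : ℕ) (r : ℕ → ℝ) (hr : ∀ i, i ≤ n → 0 < r i)
    (hprod : R ≤ ∏ i ∈ Finset.range (n + 1), r i) :
    (1 - ε) * (R ^ (1 / ((n : ℝ) + 1)) / Real.log (R ^ (1 / ((n : ℝ) + 1)))) ≤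
        ε * ∑ i ∈ Finset.range (n + 1), r i ∧
    (1 - ε) * Real.exp 1 ≤
      (1 - ε) * (R ^ (1 / ((n : ℝ) + 1)) / Real.log (R ^ (1 / ((n : ℝ) + 1)))) := by
  obtain ⟨hε0, hε1⟩ := hε
  set N : ℝ := n + 1
  have hN : 0 < N := by positivity
  set t := (1 - ε) / ε / N
  have ht : 0 < t := div_pos (div_pos (by linarith) hε0) hN
  have hroot : R ^ (1 / N) = exp t := by rw [hR, ← exp_mul, ← div_eq_mul_one_div]
  have hr_nonneg : ∀ i ∈ range (n + 1), 0 ≤ r i := fun i hi ↦ (hr i (mem_range_succ_iff.mp hi)).le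
  have hsum : N * exp t ≤ ∑ i ∈ range (n + 1), r i := by
    calc N * exp t = N * R ^ (1 / N) := by rw [hroot]
      _ ≤ N * (∏ i ∈ range (n + 1), r i) ^ (1 / N) := by
        gcongr; rw [hR]; positivity
      _ ≤ ∑ i ∈ range (n + 1), r i := by
        simpa [N] using card_mul_prod_rpow_inv_card_le_sum _ r hr_nonneg
  rw [hroot, log_exp]
  constructor
  · have hεt : ε * N * t = 1 - ε := by simp only [t]; field_simp
    calc (1 - ε) * (exp t / t) = ε * (N * exp t) := by rw [← hεt]; field_simp
      _ ≤ ε * ∑ i ∈ range (n + 1), r i := by gcongr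
  · exact mul_le_mul_of_nonneg_left ((le_div_iff₀ ht).2 exp_one_mul_le_exp) (by linarith)
end

section
/- Let R ≥ 1, Δ = 2R, and let μ be the probability distribution on positive reals with P(z = 1) = 1 − 1/Δ and P(z = Δ) = 1/Δ. Then for every r ≥ Δ², there exists an r-robust bidding strategy X with cons(X,μ) ≤ 1 + 1/R. -/
theorem costIdx_eq {X : ℕ → ℝ} {u : ℝ} {n : ℕ} (hn : u ≤ X n) (hlt : ∀ m < n, X m < u) :
    costIdx X u = n :=
  le_antisymm (Nat.sInf_le hn)
    (le_csInf ⟨n, hn⟩ fun m hm => not_lt.1 fun h => (hlt m h).not_ge hm)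

section Geometric

variable {D : ℝ}

theorem isBiddingStrategy_pow (hD : 1 < D) : IsBiddingStrategy (D ^ ·) :=
  ⟨fun _ _ h => pow_lt_pow_right₀ hD h, fun _ => by positivity,
    tendsto_pow_atTop_atTop_of_one_lt hD⟩

theorem geom_sum_range_succ_le_pow (hD : 2 ≤ D) (i : ℕ) :
    ∑ j ∈ Finset.range (i + 1), D ^ j ≤ D ^ (i + 1) := by
  rw [geom_sum_eq (by linarith), div_le_iff₀ (by linarith)]
  nlinarith [one_le_pow₀ (n := i + 1) (by linarith : (1 : ℝ) ≤ D)]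

theorem isRobust_pow {r : ℝ} (hD : 2 ≤ D) (hr : 2 * D ≤ r) : IsRobust r (D ^ ·) := by
  refine ⟨by simp only [pow_zero]; linarith, fun i => ?_⟩
  have hsum := geom_sum_range_succ_le_pow hD i
  calc D ^ (i + 1) ≤ 2 * D * D ^ i - ∑ j ∈ Finset.range (i + 1), D ^ j := by
        rw [pow_succ] at hsum ⊢; linarith
    _ ≤ r * D ^ i - ∑ j ∈ Finset.range (i + 1), D ^ j := by gcongr

theorem costIdx_pow_pow (hD : 1 < D) (k : ℕ) : costIdx (D ^ ·) (D ^ k) = k :=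
  costIdx_eq le_rfl fun _ hm => pow_lt_pow_right₀ hD hm

theorem cost_pow_pow (hD : 1 < D) (k : ℕ) :
    cost (D ^ ·) (D ^ k) = ∑ j ∈ Finset.range (k + 1), D ^ j := by
  rw [cost, costIdx_pow_pow hD]

end Geometric

theorem stmt13 (R : ℝ) (hR : 1 ≤ R) (r : ℝ) (hr : (2 * R) ^ 2 ≤ r) :
    ∃ X : ℕ → ℝ, IsBiddingStrategy X ∧ IsRobust r X ∧
      ((1 - 1 / (2 * R)) * cost X 1 + (1 / (2 * R)) * cost X (2 * R)) /
          ((1 - 1 / (2 * R)) * 1 + (1 / (2 * R)) * (2 * R)) ≤ 1 + 1 / R := by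
  set D : ℝ := 2 * R with hD_def
  have hD : 2 ≤ D := by linarith
  have hDr : 2 * D ≤ r := by nlinarith
  have cost_one : cost (D ^ ·) 1 = 1 := by
    simpa using cost_pow_pow (by linarith) 0
  have cost_D : cost (D ^ ·) D = 1 + D := by
    simpa [Finset.sum_range_succ] using cost_pow_pow (by linarith) 1
  refine ⟨(D ^ ·), isBiddingStrategy_pow (by linarith), isRobust_pow hD hDr, ?_⟩
  rw [cost_one, cost_D, div_le_iff₀ (by field_simp; linarith)]
  have hRD : 1 / R = 2 / D := by rw [hD_def]; field_simp
  rw [hRD]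
  field_simp
  nlinarith
end
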